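/- arXiv:1608.03439 — 5 statements merged into one kernel-verified Lean document; each statement's English description precedes it below -/
import Mathlib

section
/- Let n ≥ 1 be a natural number, U a finite set with |U| = n, k a natural number with k ≤ n, and set β = k/n - 1/2 (a real number, possibly negative). Let ζ be a real number with 2·√|β| ≤ ζ < 1/4. If 𝒲 is a family of k-element subsets of U with |𝒲| ≤ 2^{(1-ζ)n}, then the down-closure ↓𝒲 satisfies |↓𝒲| ≤ n·2^{(1-(ζ/2)^4)n}. -/
lemma taylor_log (u : ℝ) (h0 : 0 ≤ u) (h1 : u < 1) :
    |Real.log (1+u) - (u - u^2/2)| ≤ u^3/(1-u) ∧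
    |Real.log (1-u) + (u + u^2/2)| ≤ u^3/(1-u) := by
  have hx : |(-u : ℝ)| < 1 := by rw [abs_neg, abs_of_nonneg h0]; exact h1
  have hx' : |u| < 1 := by rw [abs_of_nonneg h0]; exact h1
  have h2 := Real.abs_log_sub_add_sum_range_le hx' 2
  have h3 := Real.abs_log_sub_add_sum_range_le hx 2
  rw [abs_of_nonneg h0] at h2
  rw [abs_neg, abs_of_nonneg h0] at h3
  simp [Finset.sum_range_succ] at h2 h3
  constructor
  · convert h3 using 2 <;> ring
  · convert h2 using 2 <;> ring

lemma g1 (u : ℝ) (h0 : 0 ≤ u) (h1 : u ≤ 1/32) :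
    -Real.log (1+u) + ((1-u)/2) * (Real.log (1+u) - Real.log (1-u))
      ≤ -(u^2/4) * Real.log 2 := by
  have hu1 : u < 1 := by linarith
  obtain ⟨hA, hB⟩ := taylor_log u h0 hu1
  rw [abs_le] at hA hB
  have hl2 : Real.log 2 < 0.6931471808 := Real.log_two_lt_d9
  have hl2' : (0.6931471803:ℝ) < Real.log 2 := Real.log_two_gt_d9
  have hR : u^3/(1-u) ≤ u^2/31 := by
    rw [div_le_div_iff₀ (by linarith) (by norm_num)]
    nlinarith [sq_nonneg u]
  set R := u^3/(1-u) with hRdef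
  have hL1low : Real.log (1+u) ≥ u - u^2/2 - R := by linarith [hA.1]
  have hL1up : Real.log (1+u) ≤ u - u^2/2 + R := by linarith [hA.2]
  have hL2low : Real.log (1-u) ≥ -u - u^2/2 - R := by linarith [hB.1]
  have hkey : -Real.log (1+u) + ((1-u)/2) * (Real.log (1+u) - Real.log (1-u))
      = (-(1+u)/2) * Real.log (1+u) + ((1-u)/2) * (-Real.log (1-u)) := by ring
  rw [hkey]
  have t1 : (-(1+u)/2) * Real.log (1+u) ≤ (-(1+u)/2) * (u - u^2/2 - R) := by
    apply mul_le_mul_of_nonpos_left hL1low (by linarith)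
  have t2 : ((1-u)/2) * (-Real.log (1-u)) ≤ ((1-u)/2) * (u + u^2/2 + R) := by
    apply mul_le_mul_of_nonneg_left (by linarith) (by linarith)
  have hsum : (-(1+u)/2) * (u - u^2/2 - R) + ((1-u)/2) * (u + u^2/2 + R)
      = R - u^2/2 := by ring
  linarith [t1, t2, hR, hsum, mul_le_mul_of_nonneg_left hl2.le (sq_nonneg u)]

lemma g2 (z : ℝ) (h0 : 0 < z) (h1 : z < 1/4) :
    Real.log (1 + z^2/2) - (z^2/2) * Real.log (z^2/2) ≤ (z - (z/2)^4) * Real.log 2 := by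
  have hl2 : Real.log 2 < 0.6931471808 := Real.log_two_lt_d9
  have hl2' : (0.6931471803:ℝ) < Real.log 2 := Real.log_two_gt_d9
  have e1 : Real.log (1 + z^2/2) ≤ z^2/2 := by
    have := Real.log_le_sub_one_of_pos (x := 1 + z^2/2) (by positivity)
    linarith
  have e2 : Real.log (1/(4*z)) ≤ 1/(4*z) - 1 := Real.log_le_sub_one_of_pos (by positivity)
  have e3 : Real.log (1/(4*z)) = -Real.log 4 - Real.log z := by
    rw [Real.log_div one_ne_zero (by positivity), Real.log_mul (by norm_num) (ne_of_gt h0)]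
    simp; ring
  have e4 : Real.log 4 = 2 * Real.log 2 := by
    rw [show (4:ℝ) = 2^2 by norm_num, Real.log_pow]; push_cast; ring
  have e5 : -Real.log z ≤ 1/(4*z) - 1 + 2 * Real.log 2 := by
    rw [e3, e4] at e2; linarith
  have e6 : z * (-Real.log z) ≤ z * (1/(4*z) - 1 + 2 * Real.log 2) :=
    mul_le_mul_of_nonneg_left e5 h0.le
  have e7 : z * (1/(4*z) - 1 + 2 * Real.log 2) = 1/4 - z + 2*z*Real.log 2 := by
    field_simp
  have e8 : Real.log (z^2/2) = 2 * Real.log z - Real.log 2 := by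
    rw [Real.log_div (by positivity) (by norm_num), Real.log_pow]; push_cast; ring
  rw [e8]
  have e9 : z * (z * (-Real.log z)) ≤ z * (1/4 - z + 2*z*Real.log 2) := by
    rw [e7] at e6
    exact mul_le_mul_of_nonneg_left e6 h0.le
  have key : Real.log (1 + z^2/2) - z^2/2 * (2*Real.log z - Real.log 2)
      = Real.log (1 + z^2/2) + z * (z * (-Real.log z)) + (z^2/2) * Real.log 2 := by ring
  rw [key]
  have hz2 : z^2 ≤ z * (1/4) := by nlinarith
  nlinarith [mul_le_mul_of_nonneg_left hl2.le (sq_nonneg z), sq_nonneg z,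
    mul_pos h0 h0, mul_le_mul_of_nonneg_left hl2'.le (mul_pos h0 (mul_pos h0 h0)).le,
    mul_le_mul_of_nonneg_left hl2.le (mul_pos h0 (mul_pos h0 h0)).le,
    mul_le_mul_of_nonneg_right hl2'.le h0.le, mul_le_mul_of_nonneg_right hl2.le h0.le]

lemma choose_le_ratio (a b : ℕ) (t : ℝ) (ht : 0 < t) :
    (a.choose b : ℝ) * t^b ≤ (1+t)^a := by
  rcases le_or_gt b a with h | h
  · have hexp : (t + 1)^a = ∑ m ∈ Finset.range (a+1), t^m * 1^(a-m) * (a.choose m : ℝ) :=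
      add_pow t 1 a
    have hsingle : t^b * 1^(a-b) * (a.choose b : ℝ)
        ≤ ∑ m ∈ Finset.range (a+1), t^m * 1^(a-m) * (a.choose m : ℝ) := by
      apply Finset.single_le_sum (f := fun m => t^m * 1^(a-m) * (a.choose m : ℝ))
      · intro i _; positivity
      · exact Finset.mem_range.2 (Nat.lt_succ_of_le h)
    calc (a.choose b : ℝ) * t^b = t^b * 1^(a-b) * (a.choose b : ℝ) := by ring
      _ ≤ (t+1)^a := by rw [hexp]; exact hsingle
      _ = (1+t)^a := by ring
  · simp [Nat.choose_eq_zero_of_lt h]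
    positivity

theorem stmt_5 {α : Type*} [DecidableEq α] (n : ℕ) (hn : 1 ≤ n)
    (U : Finset α) (hU : U.card = n) (k : ℕ) (hk : k ≤ n)
    (β : ℝ) (hβ : β = (k : ℝ) / (n : ℝ) - 1/2)
    (ζ : ℝ) (hζ1 : 2 * Real.sqrt |β| ≤ ζ) (hζ2 : ζ < 1/4)
    (𝒲 : Finset (Finset α)) (h𝒲 : ∀ W ∈ 𝒲, W ⊆ U ∧ W.card = k)
    (hcard : (𝒲.card : ℝ) ≤ (2 : ℝ) ^ ((1 - ζ) * (n : ℝ))) :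
    (((U.powerset.filter (fun X => ∃ W ∈ 𝒲, X ⊆ W)).card : ℝ))
      ≤ (n : ℝ) * (2 : ℝ) ^ ((1 - (ζ/2)^4) * (n : ℝ)) := by
  classical
  have hζ0 : 0 ≤ ζ := le_trans (by positivity) hζ1
  have hn0 : (0:ℝ) < n := by exact_mod_cast Nat.lt_of_lt_of_le Nat.zero_lt_one hn
  set D := U.powerset.filter (fun X => ∃ W ∈ 𝒲, X ⊆ W) with hDdef
  have hDpow : D ⊆ U.powerset := Finset.filter_subset _ _
  have hDcard : (D.card : ℝ) ≤ (2:ℝ)^n := by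
    have h := Finset.card_le_card hDpow
    rw [Finset.card_powerset, hU] at h
    exact_mod_cast h
  rcases eq_or_lt_of_le hζ0 with hz | hz
  · -- ζ = 0: trivial bound
    have hexp : (1 - (ζ/2)^4) * (n:ℝ) = (n:ℝ) := by rw [← hz]; norm_num
    rw [hexp, Real.rpow_natCast]
    have hn1 : (1:ℝ) ≤ n := by exact_mod_cast hn
    nlinarith [pow_pos (show (0:ℝ) < 2 by norm_num) n, hDcard]
  -- main case
  obtain ⟨ε, hεdef⟩ : ∃ ε : ℝ, ε = (ζ/2)^2 := ⟨_, rfl⟩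
  have hε0 : 0 < ε := by rw [hεdef]; positivity
  have hε64 : ε < 1/64 := by rw [hεdef]; nlinarith [hζ2, hζ0]
  have hβε : |β| ≤ ε := by
    have h1 : Real.sqrt |β| ≤ ζ/2 := by linarith
    have h2 : Real.sqrt |β| ^ 2 ≤ (ζ/2)^2 := by
      apply pow_le_pow_left₀ (Real.sqrt_nonneg _) h1
    rw [hεdef]
    rwa [Real.sq_sqrt (abs_nonneg β)] at h2
  have hkup : (k:ℝ) ≤ (1/2 + ε) * n := by
    have h1 : (k:ℝ)/n - 1/2 ≤ ε := by rw [← hβ]; exact le_trans (le_abs_self β) hβε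
    have h2 : (k:ℝ)/n ≤ 1/2 + ε := by linarith
    calc (k:ℝ) = ((k:ℝ)/n) * n := by field_simp
      _ ≤ (1/2 + ε) * n := by apply mul_le_mul_of_nonneg_right h2 hn0.le
  have hkltn : k + 1 ≤ n := by
    have : (k:ℝ) < n := by nlinarith
    have : k < n := by exact_mod_cast this
    omega
  obtain ⟨u, hudef⟩ : ∃ u : ℝ, u = 2 * ε := ⟨_, rfl⟩
  have hu0 : 0 < u := by rw [hudef]; positivity
  have hu32 : u ≤ 1/32 := by rw [hudef]; linarith
  -- fiberwise decomposition
  have hmem : ∀ X ∈ D, X.card ∈ Finset.range (k+1) := by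
    intro X hX
    rw [hDdef, Finset.mem_filter] at hX
    obtain ⟨-, W, hW, hXW⟩ := hX
    have := Finset.card_le_card hXW
    rw [(h𝒲 W hW).2] at this
    exact Finset.mem_range.2 (Nat.lt_succ_of_le this)
  have hsum : D.card = ∑ j ∈ Finset.range (k+1), (D.filter (fun X => X.card = j)).card :=
    Finset.card_eq_sum_card_fiberwise hmem
  have hε2 : ε^2 = (ζ/2)^4 := by rw [hεdef]; ring
  have hterm : ∀ j ∈ Finset.range (k+1),
      ((D.filter (fun X => X.card = j)).card : ℝ) ≤ (2:ℝ)^((1 - ε^2) * (n:ℝ)) := by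
    intro j hj
    have hjk : j ≤ k := Nat.lt_succ_iff.mp (Finset.mem_range.mp hj)
    have hrpos : (0:ℝ) < (2:ℝ)^((1 - ε^2) * (n:ℝ)) := Real.rpow_pos_of_pos two_pos _
    by_cases hc : (j:ℝ) ≤ (1/2 - ε) * n
    · -- small j : use binomial coefficient of n
      have b1 : ((D.filter (fun X => X.card = j)).card : ℝ) ≤ (n.choose j : ℝ) := by
        have hsub : D.filter (fun X => X.card = j) ⊆ U.powersetCard j := by
          intro X hX
          rw [Finset.mem_filter] at hX
          obtain ⟨hX1, hX2⟩ := hX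
          rw [hDdef, Finset.mem_filter, Finset.mem_powerset] at hX1
          exact Finset.mem_powersetCard.2 ⟨hX1.1, hX2⟩
        have := Finset.card_le_card hsub
        rw [Finset.card_powersetCard, hU] at this
        exact_mod_cast this
      obtain ⟨t, htdef⟩ : ∃ t : ℝ, t = (1-u)/(1+u) := ⟨_, rfl⟩
      have ht0 : 0 < t := by rw [htdef]; apply div_pos <;> linarith
      have ht1 : t < 1 := by rw [htdef, div_lt_one (by linarith)]; linarith
      have hchoose : (n.choose j : ℝ) ≤ (1+t)^n / t^j := by
        rw [le_div_iff₀ (pow_pos ht0 j)]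
        exact choose_le_ratio n j t ht0
      refine le_trans b1 (le_trans hchoose ?_)
      -- log comparison
      have hlhs_pos : (0:ℝ) < (1+t)^n / t^j := by positivity
      apply (Real.log_le_log_iff hlhs_pos hrpos).mp
      rw [Real.log_div (by positivity) (by positivity), Real.log_pow, Real.log_pow,
        Real.log_rpow two_pos]
      have hlog1t : Real.log (1+t) = Real.log 2 - Real.log (1+u) := by
        have h1t : 1 + t = 2/(1+u) := by rw [htdef]; field_simp; ring
        rw [h1t, Real.log_div two_ne_zero (by linarith)]
      have hlogt : Real.log t = Real.log (1-u) - Real.log (1+u) := by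
        rw [htdef, Real.log_div (by linarith) (by linarith)]
      have hlogtneg : Real.log t ≤ 0 := Real.log_nonpos ht0.le ht1.le
      have hjlog : ((1/2 - ε) * n) * Real.log t ≤ (j:ℝ) * Real.log t :=
        mul_le_mul_of_nonpos_right hc hlogtneg
      have hbase : Real.log (1+t) - (1/2 - ε) * Real.log t ≤ (1 - ε^2) * Real.log 2 := by
        rw [hlog1t, hlogt]
        have hg := g1 u hu0.le hu32
        have hεu : ε = u/2 := by rw [hudef]; ring
        rw [hεu]
        linarith [hg]
      have hbase' := mul_le_mul_of_nonneg_left hbase hn0.le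
      linarith [hjlog, hbase']
    · -- large j : use the family bound
      push_neg at hc
      have b2 : ((D.filter (fun X => X.card = j)).card : ℝ)
          ≤ (𝒲.card : ℝ) * (k.choose j : ℝ) := by
        have hsub : D.filter (fun X => X.card = j)
            ⊆ 𝒲.biUnion (fun W => Finset.powersetCard j W) := by
          intro X hX
          rw [Finset.mem_filter] at hX
          obtain ⟨hX1, hX2⟩ := hX
          rw [hDdef, Finset.mem_filter] at hX1
          obtain ⟨-, W, hW, hXW⟩ := hX1
          exact Finset.mem_biUnion.2 ⟨W, hW, Finset.mem_powersetCard.2 ⟨hXW, hX2⟩⟩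
        have h1 := Finset.card_le_card hsub
        have h2 := Finset.card_biUnion_le (s := 𝒲) (t := fun W => Finset.powersetCard j W)
        have h3 : ∑ W ∈ 𝒲, (Finset.powersetCard j W).card = 𝒲.card * k.choose j := by
          rw [Finset.sum_congr rfl (fun W hW => by
            rw [Finset.card_powersetCard, (h𝒲 W hW).2]), Finset.sum_const, smul_eq_mul]
        have := le_trans h1 (le_trans h2 (le_of_eq h3))
        exact_mod_cast this
      obtain ⟨m, hmdef⟩ : ∃ m : ℕ, m = k - j := ⟨_, rfl⟩
      have hmcast : (m:ℝ) = (k:ℝ) - (j:ℝ) := by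
        rw [hmdef]; push_cast [Nat.cast_sub hjk]; ring
      have hmle : (m:ℝ) ≤ 2*ε*n := by rw [hmcast]; linarith [hkup, hc]
      have hcs : (k.choose j : ℝ) = (k.choose m : ℝ) := by
        rw [hmdef, Nat.choose_symm hjk]
      have hchoose : (k.choose m : ℝ) ≤ (1+u)^n / u^m := by
        rw [le_div_iff₀ (pow_pos hu0 m)]
        calc (k.choose m : ℝ) * u^m ≤ (1+u)^k := choose_le_ratio k m u hu0
          _ ≤ (1+u)^n := pow_le_pow_right₀ (by linarith) hk
      have hWb : ((D.filter (fun X => X.card = j)).card : ℝ)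
          ≤ (2:ℝ)^((1-ζ)*(n:ℝ)) * ((1+u)^n / u^m) := by
        refine le_trans b2 ?_
        rw [hcs]
        apply mul_le_mul hcard hchoose (by positivity) (by positivity)
      refine le_trans hWb ?_
      have hlhs_pos : (0:ℝ) < (2:ℝ)^((1-ζ)*(n:ℝ)) * ((1+u)^n / u^m) := by positivity
      apply (Real.log_le_log_iff hlhs_pos hrpos).mp
      rw [Real.log_mul (by positivity) (by positivity),
        Real.log_div (by positivity) (by positivity), Real.log_pow, Real.log_pow,
        Real.log_rpow two_pos, Real.log_rpow two_pos]
      have hloguneg : Real.log u ≤ 0 := Real.log_nonpos hu0.le (by linarith)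
      have hmlog : (2*ε*n) * Real.log u ≤ (m:ℝ) * Real.log u :=
        mul_le_mul_of_nonpos_right hmle hloguneg
      have hbase : Real.log (1+u) - (2*ε) * Real.log u ≤ (ζ - ε^2) * Real.log 2 := by
        have hg := g2 ζ hz hζ2
        have huz : u = ζ^2/2 := by rw [hudef, hεdef]; ring
        have hε2' : ε^2 = (ζ/2)^4 := hε2
        rw [huz]
        have h2e : (2:ℝ)*ε = ζ^2/2 := by rw [hεdef]; ring
        rw [h2e, hε2']
        linarith [hg]
      have hbase' := mul_le_mul_of_nonneg_left hbase hn0.le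
      linarith [hmlog, hbase']
  -- put it together
  have hfinal : (D.card : ℝ) ≤ ((k:ℝ)+1) * (2:ℝ)^((1 - ε^2) * (n:ℝ)) := by
    have h1 : (D.card : ℝ) = ∑ j ∈ Finset.range (k+1),
        ((D.filter (fun X => X.card = j)).card : ℝ) := by
      rw [hsum]; push_cast; ring
    rw [h1]
    calc ∑ j ∈ Finset.range (k+1), ((D.filter (fun X => X.card = j)).card : ℝ)
        ≤ ∑ _j ∈ Finset.range (k+1), (2:ℝ)^((1 - ε^2) * (n:ℝ)) :=
          Finset.sum_le_sum hterm
      _ = ((k:ℝ)+1) * (2:ℝ)^((1 - ε^2) * (n:ℝ)) := by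
          rw [Finset.sum_const, Finset.card_range]; push_cast; ring
  have hk1n : ((k:ℝ)+1) ≤ (n:ℝ) := by exact_mod_cast hkltn
  have hexp2 : (1 - ε^2) * (n:ℝ) = (1 - (ζ/2)^4) * (n:ℝ) := by rw [hε2]
  rw [← hexp2]
  refine le_trans hfinal ?_
  apply mul_le_mul_of_nonneg_right hk1n (Real.rpow_nonneg (by norm_num) _)
end

section
/- Let ζ and β be real numbers with 0 < ζ < 1/4 and |β| ≤ ζ²/4. Then h((1-ζ²)·(1/2+β)) ≤ 1 - (ζ/2)^4. -/
/-- Cubic lower bound on `log (1 - u)` for `|u| ≤ 1/2`. -/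
lemma log_one_sub_ge_aux (u : ℝ) (hu : |u| ≤ 1/2) :
    -u - u^2/2 - 2*|u|^3 ≤ Real.log (1 - u) := by
  have h1 : |u| < 1 := lt_of_le_of_lt hu (by norm_num)
  have h0 := Real.abs_log_sub_add_sum_range_le h1 2
  simp [Finset.sum_range_succ] at h0
  norm_num at h0
  have h2 : |u|^3 / (1 - |u|) ≤ 2*|u|^3 := by
    rw [div_le_iff₀ (by linarith)]
    nlinarith [pow_nonneg (abs_nonneg u) 3]
  have := (abs_le.1 h0).1
  linarith

/-- The binary entropy function (base-2 logarithms). -/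
noncomputable def binEntropy (x : ℝ) : ℝ :=
  -x * Real.logb 2 x - (1 - x) * Real.logb 2 (1 - x)

/-- Quadratic upper bound on the binary entropy slightly below `1/2`. -/
lemma binEntropy_le_one_sub_sq (t : ℝ) (ht0 : 0 < t) (ht2 : t ≤ 3/64) :
    binEntropy (1/2 - t) ≤ 1 - t^2 := by
  have hA := log_one_sub_ge_aux (2*t) (by rw [abs_of_pos (by linarith)]; linarith)
  have hB := log_one_sub_ge_aux (-(2*t)) (by rw [abs_neg, abs_of_pos (by linarith)]; linarith)
  rw [abs_of_pos (by linarith : (0:ℝ) < 2*t)] at hA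
  rw [abs_neg, abs_of_pos (by linarith : (0:ℝ) < 2*t)] at hB
  have hB' : 2*t - (2*t)^2/2 - 2*(2*t)^3 ≤ Real.log (1 + 2*t) := by
    have h : (1 : ℝ) - -(2*t) = 1 + 2*t := by ring
    rw [h] at hB; linarith
  have hlog2 : (0:ℝ) < Real.log 2 := Real.log_pos (by norm_num)
  have h2t : (0:ℝ) < 1 - 2*t := by linarith
  have hlx : Real.log (1/2 - t) = Real.log (1 - 2*t) - Real.log 2 := by
    rw [show (1:ℝ)/2 - t = (1 - 2*t)/2 by ring,
      Real.log_div (ne_of_gt h2t) (by norm_num)]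
  have hl1x : Real.log (1 - (1/2 - t)) = Real.log (1 + 2*t) - Real.log 2 := by
    rw [show (1:ℝ) - (1/2 - t) = (1 + 2*t)/2 by ring,
      Real.log_div (by positivity) (by norm_num)]
  have hent : binEntropy (1/2 - t) = 1 -
      ((1/2 - t) * Real.log (1 - 2*t) + (1/2 + t) * Real.log (1 + 2*t)) / Real.log 2 := by
    rw [binEntropy, Real.logb, Real.logb, hlx, hl1x]
    field_simp
    ring
  rw [hent]
  have hlog2' : Real.log 2 ≤ 1 := by
    have := Real.log_two_lt_d9; linarith
  have h12 : (0:ℝ) ≤ 1/2 - t := by linarith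
  have h12' : (0:ℝ) ≤ 1/2 + t := by linarith
  have e1 := mul_le_mul_of_nonneg_left hA h12
  have e2 := mul_le_mul_of_nonneg_left hB' h12'
  have key : (1/2 - t) * (-(2*t) - (2*t)^2/2 - 2*(2*t)^3)
      + (1/2 + t) * (2*t - (2*t)^2/2 - 2*(2*t)^3) = 2*t^2 - 16*t^3 := by ring
  have ht3 : 16*t^3 ≤ (3/4)*t^2 := by nlinarith
  have hS : Real.log 2 * t^2 ≤
      (1/2 - t) * Real.log (1 - 2*t) + (1/2 + t) * Real.log (1 + 2*t) := by
    nlinarith [sq_nonneg t]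
  rw [sub_le_sub_iff_left, le_div_iff₀ hlog2]
  linarith

theorem stmt_6 (ζ β : ℝ) (hζ0 : 0 < ζ) (hζ1 : ζ < 1/4) (hβ : |β| ≤ ζ^2/4) :
    binEntropy ((1 - ζ^2) * (1/2 + β)) ≤ 1 - (ζ/2)^4 := by
  have hζ2 : ζ^2 < 1/16 := by nlinarith
  have hβ1 := abs_le.1 hβ
  have hxv : (1 - ζ^2) * (1/2 + β) = 1/2 - (ζ^2/2 - β*(1-ζ^2)) := by ring
  set s : ℝ := ζ^2/2 - β*(1-ζ^2) with hs
  have hs1 : ζ^2/4 ≤ s := by nlinarith [hβ1.1, hβ1.2]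
  have hs2 : s ≤ 3/64 := by nlinarith [hβ1.1, hβ1.2]
  have hs0 : 0 < s := lt_of_lt_of_le (by positivity) hs1
  rw [hxv]
  have h := binEntropy_le_one_sub_sq s hs0 hs2
  have : (ζ/2)^4 ≤ s^2 := by nlinarith [sq_nonneg ζ]
  linarith
end

section
/- Let σ₀ be a real number with 0 < σ₀ ≤ 1, let n and s be positive integers, and let d : Fin s → ℕ satisfy Σ_{i} d(i) = n and d(i) ≤ σ₀⁴·n/8 for every i. Then the number of subsets T ⊆ Fin s with |Σ_{i∈T} d(i) − n/2| ≤ σ₀²·n/4 is at least 2^s/4. -/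
open Finset
open scoped symmDiff

theorem stmt_10 (σ₀ : ℝ) (hσ0 : 0 < σ₀) (hσ1 : σ₀ ≤ 1)
    (n s : ℕ) (hn : 0 < n) (hs : 0 < s) (d : Fin s → ℕ)
    (hsum : ∑ i, d i = n)
    (hsmall : ∀ i, (d i : ℝ) ≤ σ₀^4 * (n : ℝ) / 8) :
    (2 : ℝ) ^ s / 4 ≤
      ({T : Finset (Fin s) |
          |(∑ i ∈ T, (d i : ℝ)) - (n : ℝ) / 2| ≤ σ₀^2 * (n : ℝ) / 4}.ncard : ℝ) := by
  classical
  set g : Finset (Fin s) → Fin s → ℝ := fun T i => if i ∈ T then (1:ℝ)/2 else -(1/2) with hg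
  set f : Finset (Fin s) → ℝ := fun T => (∑ i ∈ T, (d i : ℝ)) - n / 2 with hf
  set t : ℝ := σ₀^2 * (n:ℝ) / 4 with htdef
  have hsumR : ∑ i, (d i : ℝ) = n := by exact_mod_cast hsum
  have hfg : ∀ T, f T = ∑ i, (d i : ℝ) * g T i := by
    intro T
    have h1 : ∀ i ∈ Finset.univ, (d i : ℝ) * g T i
        = (if i ∈ T then (d i : ℝ) else 0) - (d i : ℝ)/2 := by
      intro i _; by_cases h : i ∈ T <;> simp [hg, h] <;> ring
    rw [hf, Finset.sum_congr rfl h1, Finset.sum_sub_distrib,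
      Finset.sum_ite_mem, Finset.univ_inter, ← Finset.sum_div, hsumR]
  have hB : ∀ i j : Fin s, ∑ T : Finset (Fin s), g T i * g T j
      = if i = j then (2:ℝ)^s / 4 else 0 := by
    intro i j
    by_cases hij : i = j
    · subst hij
      have h4 : ∀ T ∈ (Finset.univ : Finset (Finset (Fin s))), g T i * g T i = 1/4 := by
        intro T _; by_cases h : i ∈ T <;> simp [hg, h] <;> norm_num
      rw [Finset.sum_congr rfl h4, Finset.sum_const, Finset.card_univ, Fintype.card_finset,
        Fintype.card_fin, if_pos rfl, nsmul_eq_mul]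
      push_cast
      ring
    · rw [if_neg hij]
      have hinv : Function.Involutive (fun T : Finset (Fin s) => T ∆ ({i} : Finset (Fin s))) :=
        fun T => symmDiff_symmDiff_cancel_right {i} T
      have key : ∀ T : Finset (Fin s), g (T ∆ {i}) i * g (T ∆ {i}) j = -(g T i * g T j) := by
        intro T
        have h1 : i ∈ T ∆ ({i} : Finset (Fin s)) ↔ i ∉ T := by
          simp [Finset.mem_symmDiff]
        have h2 : j ∈ T ∆ ({i} : Finset (Fin s)) ↔ j ∈ T := by
          simp [Finset.mem_symmDiff, Ne.symm hij, hij]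
        by_cases hiT : i ∈ T <;> by_cases hjT : j ∈ T <;>
          simp [hg, h1, h2, hiT, hjT] <;> ring
      have hswap : ∑ T : Finset (Fin s), g (T ∆ {i}) i * g (T ∆ {i}) j
          = ∑ T : Finset (Fin s), g T i * g T j :=
        Fintype.sum_bijective _ hinv.bijective _ _ (fun T => rfl)
      have hneg : ∑ T : Finset (Fin s), g T i * g T j
          = - ∑ T : Finset (Fin s), g T i * g T j := by
        conv_lhs => rw [← hswap]
        simp only [key, Finset.sum_neg_distrib]
      linarith
  have hC : ∑ T : Finset (Fin s), (f T)^2 = (2:ℝ)^s/4 * ∑ i, (d i:ℝ)^2 := by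
    have hexp : ∀ T ∈ (Finset.univ : Finset (Finset (Fin s))), (f T)^2
        = ∑ i, ∑ j, ((d i:ℝ) * (d j:ℝ)) * (g T i * g T j) := by
      intro T _
      rw [hfg, sq, Finset.sum_mul_sum]
      exact Finset.sum_congr rfl fun i _ => Finset.sum_congr rfl fun j _ => by ring
    rw [Finset.sum_congr rfl hexp, Finset.sum_comm]
    have step : ∀ i ∈ (Finset.univ : Finset (Fin s)),
        (∑ T : Finset (Fin s), ∑ j, ((d i:ℝ)*(d j:ℝ))*(g T i * g T j))
          = (d i:ℝ)^2 * ((2:ℝ)^s/4) := by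
      intro i _
      rw [Finset.sum_comm]
      have h5 : ∀ j ∈ (Finset.univ : Finset (Fin s)),
          (∑ T : Finset (Fin s), ((d i:ℝ)*(d j:ℝ))*(g T i * g T j))
            = if i = j then (d i:ℝ)*(d j:ℝ)*((2:ℝ)^s/4) else 0 := by
        intro j _
        rw [← Finset.mul_sum, hB]
        by_cases h : i = j <;> simp [h]
      rw [Finset.sum_congr rfl h5, Finset.sum_ite_eq]
      simp [sq]
    rw [Finset.sum_congr rfl step, ← Finset.sum_mul]
    ring
  -- translate ncard to a filter card
  have hset : {T : Finset (Fin s) |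
      |(∑ i ∈ T, (d i : ℝ)) - (n : ℝ) / 2| ≤ σ₀^2 * (n : ℝ) / 4}
      = ↑(Finset.univ.filter (fun T : Finset (Fin s) => |f T| ≤ t)) := by
    ext T; simp [hf, htdef]
  rw [hset, Set.ncard_coe_finset]
  set G := Finset.univ.filter (fun T : Finset (Fin s) => |f T| ≤ t) with hG
  set B := Finset.univ.filter (fun T : Finset (Fin s) => ¬ |f T| ≤ t) with hBdef
  have hnpos : (0:ℝ) < n := by exact_mod_cast hn
  have ht0 : 0 ≤ t := by positivity
  have hBd : (B.card : ℝ) * t^2 ≤ ∑ T : Finset (Fin s), (f T)^2 := by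
    calc (B.card:ℝ) * t^2 = ∑ _T ∈ B, t^2 := by rw [Finset.sum_const, nsmul_eq_mul]
      _ ≤ ∑ T ∈ B, (f T)^2 := by
          refine Finset.sum_le_sum fun T hT => ?_
          have hna : ¬(|f T| ≤ t) := (Finset.mem_filter.mp hT).2
          have h1 : t ≤ |f T| := le_of_lt (not_le.mp hna)
          calc t^2 ≤ |f T|^2 := pow_le_pow_left₀ ht0 h1 2
            _ = (f T)^2 := sq_abs _
      _ ≤ ∑ T : Finset (Fin s), (f T)^2 :=
          Finset.sum_le_sum_of_subset_of_nonneg (Finset.filter_subset _ _)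
            (fun T _ _ => sq_nonneg _)
  have hsumsq : ∑ i, (d i:ℝ)^2 ≤ (σ₀^4*(n:ℝ)/8) * n := by
    calc ∑ i, (d i:ℝ)^2 ≤ ∑ i, (σ₀^4*(n:ℝ)/8) * (d i:ℝ) := by
          refine Finset.sum_le_sum fun i _ => ?_
          have h1 := hsmall i
          have h2 : (0:ℝ) ≤ (d i : ℝ) := Nat.cast_nonneg _
          nlinarith
      _ = (σ₀^4*(n:ℝ)/8) * n := by rw [← Finset.mul_sum, hsumR]
  have h2pos : (0:ℝ) < 2^s := by positivity
  have hBcard : (B.card : ℝ) ≤ 2^s/2 := by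
    have h1 : (B.card:ℝ) * t^2 ≤ (2:ℝ)^s/4 * ((σ₀^4*(n:ℝ)/8) * n) := by
      refine hBd.trans ?_
      rw [hC]
      exact mul_le_mul_of_nonneg_left hsumsq (by positivity)
    have hteq : t^2 = σ₀^4 * (n:ℝ)^2 / 16 := by rw [htdef]; ring
    have hcpos : (0:ℝ) < σ₀^4 * (n:ℝ)^2 / 16 := by positivity
    rw [hteq] at h1
    nlinarith [h1, hcpos, mul_nonneg (Nat.cast_nonneg B.card : (0:ℝ) ≤ B.card) hcpos.le]
  have hsplit : G.card + B.card = 2^s := by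
    rw [hG, hBdef, Finset.card_filter_add_card_filter_not, Finset.card_univ,
      Fintype.card_finset, Fintype.card_fin]
  have hsplitR : (G.card : ℝ) + B.card = 2^s := by exact_mod_cast hsplit
  linarith
end

section
/- Let A be an n×m matrix over the field 𝔽₂ = ZMod 2 and let b ∈ 𝔽₂ⁿ. Suppose x ∈ 𝔽₂^m satisfies A·x = b and has minimum Hamming weight among all solutions, i.e. for every y ∈ 𝔽₂^m with A·y = b one has |{i : x_i ≠ 0}| ≤ |{i : y_i ≠ 0}|. Then the family of columns of A indexed by the support {i : x_i ≠ 0} is linearly independent over 𝔽₂. -/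
theorem stmt_11 {n m : ℕ} (A : Matrix (Fin n) (Fin m) (ZMod 2)) (b : Fin n → ZMod 2)
    (x : Fin m → ZMod 2) (hx : A.mulVec x = b)
    (hmin : ∀ y : Fin m → ZMod 2, A.mulVec y = b →
      (Finset.univ.filter (fun i => x i ≠ 0)).card ≤
        (Finset.univ.filter (fun i => y i ≠ 0)).card) :
    LinearIndependent (ZMod 2)
      (fun i : {i : Fin m // x i ≠ 0} => (fun j => A j i.val : Fin n → ZMod 2)) := by
  rw [Fintype.linearIndependent_iff]
  intro g hg
  by_contra hne
  push_neg at hne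
  obtain ⟨i0, hi0⟩ := hne
  set z : Fin m → ZMod 2 := fun j => if h : x j ≠ 0 then g ⟨j, h⟩ else 0 with hz
  have hAz : A.mulVec z = 0 := by
    funext j
    have hj := congrFun hg j
    simp only [Finset.sum_apply, Pi.smul_apply, Pi.zero_apply, smul_eq_mul] at hj
    show (∑ i, A j i * z i) = 0
    rw [← hj]
    have h1 : (∑ i, A j i * z i) =
        ∑ i ∈ Finset.univ.filter (fun i => x i ≠ 0), A j i * z i := by
      refine (Finset.sum_filter_of_ne ?_).symm
      intro i _ h
      by_contra hxi
      apply h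
      have hzi : z i = 0 := by simp [hz, hxi]
      rw [hzi, mul_zero]
    rw [h1, Finset.sum_subtype (p := fun i => x i ≠ 0)
      (Finset.univ.filter (fun i => x i ≠ 0))
      (fun i => by simp) (fun i => A j i * z i)]
    apply Finset.sum_congr rfl
    intro a _
    simp [hz, a.prop, mul_comm]
  have hAy : A.mulVec (x + z) = b := by
    rw [Matrix.mulVec_add, hx, hAz, add_zero]
  have hsub : (Finset.univ.filter (fun i => (x + z) i ≠ 0)) ⊆
      (Finset.univ.filter (fun i => x i ≠ 0)) := by
    intro i hi
    simp only [Finset.mem_filter, Finset.mem_univ, true_and] at hi ⊢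
    intro hxi
    apply hi
    simp [hz, Pi.add_apply, hxi]
  have hcard := hmin _ hAy
  have heq := Finset.eq_of_subset_of_card_le hsub hcard
  have hmem : i0.val ∈ (Finset.univ.filter (fun i => x i ≠ 0)) := by
    simp [i0.prop]
  rw [← heq] at hmem
  simp only [Finset.mem_filter, Finset.mem_univ, true_and] at hmem
  apply hmem
  have h2 : ∀ a : ZMod 2, a ≠ 0 → a = 1 := by decide
  have hzx : z i0.val = 1 := by
    simp only [hz, dif_pos i0.prop]
    exact h2 _ (by simpa using hi0)
  rw [Pi.add_apply, h2 _ i0.prop, hzx]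
  decide
end

section
/- Let U be a finite set, let 𝓕 be a finite family of nonempty subsets of U, and let c, t be positive integers with s = c·t. Then the following are equivalent: (1) there exists a subfamily 𝒮 ⊆ 𝓕 with |𝒮| = s whose members are pairwise disjoint and whose union is U; (2) there exist sets G₁,…,G_t ⊆ U that are pairwise disjoint with union U, such that each G_j is the union of some subfamily 𝒯_j ⊆ 𝓕 with |𝒯_j| = c whose members are pairwise disjoint. -/
theorem stmt_15 {α : Type*} [DecidableEq α] (U : Finset α) (𝓕 : Finset (Finset α))
    (h𝓕 : ∀ f ∈ 𝓕, f.Nonempty ∧ f ⊆ U)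
    (c t s : ℕ) (hc : 0 < c) (ht : 0 < t) (hs : s = c * t) :
    (∃ 𝒮 ⊆ 𝓕, 𝒮.card = s ∧ (𝒮 : Set (Finset α)).PairwiseDisjoint id ∧
        𝒮.biUnion id = U) ↔
    (∃ G : Fin t → Finset α, (∀ i j, i ≠ j → Disjoint (G i) (G j)) ∧
        Finset.univ.biUnion G = U ∧
        ∀ j, ∃ 𝒯 ⊆ 𝓕, 𝒯.card = c ∧ (𝒯 : Set (Finset α)).PairwiseDisjoint id ∧
          𝒯.biUnion id = G j) := by
  constructor
  · rintro ⟨𝒮, h𝒮F, hcard, hdisj, hunion⟩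
    have e : {x // x ∈ 𝒮} ≃ Fin (c * t) :=
      (𝒮.equivFin).trans (finCongr (by rw [hcard, hs]))
    set f : Fin c × Fin t → Finset α := fun p => (e.symm (finProdFinEquiv p) : Finset α) with hf
    have hfinj : Function.Injective f := by
      intro p q h
      have : e.symm (finProdFinEquiv p) = e.symm (finProdFinEquiv q) := Subtype.coe_injective h
      exact finProdFinEquiv.injective (e.symm.injective this)
    have hfmem : ∀ p, f p ∈ 𝒮 := fun p => (e.symm (finProdFinEquiv p)).2
    have hfsurj : ∀ x ∈ 𝒮, ∃ p, f p = x := by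
      intro x hx
      refine ⟨finProdFinEquiv.symm (e ⟨x, hx⟩), ?_⟩
      show (↑(e.symm (finProdFinEquiv (finProdFinEquiv.symm (e ⟨x, hx⟩)))) : Finset α) = x
      rw [Equiv.apply_symm_apply, Equiv.symm_apply_apply]
    set 𝒯 : Fin t → Finset (Finset α) :=
      fun j => Finset.univ.image (fun i : Fin c => f (i, j)) with h𝒯
    have h𝒯mem : ∀ j x, x ∈ 𝒯 j ↔ ∃ i, f (i, j) = x := by
      intro j x; simp [h𝒯]
    have h𝒯sub : ∀ j, 𝒯 j ⊆ 𝒮 := by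
      intro j x hx
      obtain ⟨i, hi⟩ := (h𝒯mem j x).1 hx
      exact hi ▸ hfmem (i, j)
    refine ⟨fun j => (𝒯 j).biUnion id, ?_, ?_, ?_⟩
    · intro i j hij
      rw [Finset.disjoint_biUnion_left]
      intro a ha
      rw [Finset.disjoint_biUnion_right]
      intro b hb
      obtain ⟨p, hp⟩ := (h𝒯mem i a).1 ha
      obtain ⟨q, hq⟩ := (h𝒯mem j b).1 hb
      have hab : a ≠ b := by
        rintro rfl
        exact hij (congrArg Prod.snd (hfinj (hp.trans hq.symm)))
      exact hdisj (h𝒯sub i ha) (h𝒯sub j hb) hab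
    · rw [← hunion]
      ext x
      simp only [Finset.mem_biUnion, Finset.mem_univ, true_and, id]
      constructor
      · rintro ⟨j, a, ha, hxa⟩
        exact ⟨a, h𝒯sub j ha, hxa⟩
      · rintro ⟨a, ha, hxa⟩
        obtain ⟨⟨i, j⟩, hp⟩ := hfsurj a ha
        exact ⟨j, a, (h𝒯mem j a).2 ⟨i, hp⟩, hxa⟩
    · intro j
      refine ⟨𝒯 j, fun x hx => h𝒮F (h𝒯sub j hx), ?_, ?_, rfl⟩
      · rw [h𝒯, Finset.card_image_of_injective _ (fun i i' h => ?_), Finset.card_univ,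
          Fintype.card_fin]
        exact (Prod.mk.injEq .. ▸ hfinj h).1
      · exact hdisj.subset (by exact_mod_cast h𝒯sub j)
  · rintro ⟨G, hGdisj, hGunion, h𝒯⟩
    choose 𝒯 h1 h2 h3 h4 using h𝒯
    have hsub : ∀ j, ∀ x ∈ 𝒯 j, x ⊆ G j := by
      intro j x hx
      rw [← h4 j]
      exact fun a ha => Finset.mem_biUnion.2 ⟨x, hx, ha⟩
    have h𝒯disj : ∀ i j : Fin t, i ≠ j → Disjoint (𝒯 i) (𝒯 j) := by
      intro i j hij
      rw [Finset.disjoint_left]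
      intro x hxi hxj
      have hne := (h𝓕 x (h1 i hxi)).1
      have : x ⊆ G i ∩ G j := Finset.subset_inter (hsub i x hxi) (hsub j x hxj)
      rw [Finset.disjoint_iff_inter_eq_empty.1 (hGdisj i j hij)] at this
      exact hne.ne_empty (Finset.subset_empty.1 this)
    refine ⟨Finset.univ.biUnion 𝒯, ?_, ?_, ?_, ?_⟩
    · intro x hx
      obtain ⟨j, -, hj⟩ := Finset.mem_biUnion.1 hx
      exact h1 j hj
    · rw [Finset.card_biUnion (fun i _ j _ hij => h𝒯disj i j hij)]
      simp [h2, hs, Nat.mul_comm]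
    · intro a ha b hb hab
      simp only [Finset.coe_biUnion, Set.mem_iUnion, Finset.mem_coe] at ha hb
      obtain ⟨i, -, hai⟩ := ha
      obtain ⟨j, -, hbj⟩ := hb
      by_cases hij : i = j
      · subst hij
        exact h3 i hai hbj hab
      · exact ((hGdisj i j hij).mono (hsub i a hai) (hsub j b hbj))
    · rw [← hGunion]
      ext x
      simp only [Finset.mem_biUnion, Finset.mem_univ, true_and, id]
      constructor
      · rintro ⟨a, ⟨j, hj⟩, hxa⟩
        exact ⟨j, hsub j a hj hxa⟩
      · rintro ⟨j, hxj⟩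
        rw [← h4 j] at hxj
        obtain ⟨a, ha, hxa⟩ := Finset.mem_biUnion.1 hxj
        exact ⟨a, ⟨j, ha⟩, hxa⟩
end
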